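/- Let K ⊆ ℝ be a compact interval with length L := Leb(K), let d ∈ ℕ, let D₁ ≥ D₂ ≥ … ≥ D_d > 0, and suppose 0 < δ ≤ min{D_d/10, L/10}. Then cov( (DCF_{d,D}(K), d_DCF), δ ) ≤ ( (2L/δ)·(2D₁/δ)·(2D₂/δ)²·(2D₃/δ)⁴·…·(2D_d/δ)^{2^{d−1}} )². -/

import Mathlib

open scoped ENNReal

/-- The `δ`-covering number of a set `A` with respect to a pseudometric `ρ`:
the least cardinality of a finite `F ⊆ A` whose open `δ`-balls cover `A`. -/
noncomputable def covN {X : Type*} (A : Set X) (ρ : X → X → ℝ) (δ : ℝ) : ℕ∞ :=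
  sInf {n : ℕ∞ | ∃ F : Finset X, ↑F ⊆ A ∧ (F.card : ℕ∞) = n ∧
    ∀ a ∈ A, ∃ b ∈ F, ρ b a < δ}

/-- The set `DCF_{d,D}(K)` of discrete Cantor families of depth `d`:
families `(K_ω)_{ω∈{0,1}^d}` of pairwise-disjoint nonempty compact subintervals of
`K = [a,b]` with gap upper bounds `D`; an interval is encoded by its pair of
endpoints. -/
def DCFset (a b : ℝ) (d : ℕ) (D : Fin d → ℝ) : Set ((Fin d → Bool) → ℝ × ℝ) :=
  {e | (∀ ω, (e ω).1 ≤ (e ω).2) ∧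
    (∀ ω, Set.Icc (e ω).1 (e ω).2 ⊆ Set.Icc a b) ∧
    (∀ ω ω' : Fin d → Bool, ω ≠ ω' →
      Disjoint (Set.Icc (e ω).1 (e ω).2) (Set.Icc (e ω').1 (e ω').2)) ∧
    ∀ (i : ℕ) (hi : i < d), ∀ ω ω' : Fin d → Bool,
      (∀ j : Fin d, (j : ℕ) < i → ω j = ω' j) →
      Metric.diam (Set.Icc (e ω).1 (e ω).2 ∪ Set.Icc (e ω').1 (e ω').2) ≤ D ⟨i, hi⟩}

/-- The sup-of-Hausdorff-distances metric on families of compact intervals indexed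
by `{0,1}^d`. -/
noncomputable def dDCF {d : ℕ} (e e' : (Fin d → Bool) → ℝ × ℝ) : ℝ :=
  Finset.univ.sup' Finset.univ_nonempty
    (fun ω : Fin d → Bool =>
      Metric.hausdorffDist (Set.Icc (e ω).1 (e ω).2) (Set.Icc (e' ω).1 (e' ω).2))

/-! Round every endpoint down to the grid `δℤ`. Two families with the same rounded endpoints are
`δ`-close, so it suffices to count the possible rounded families. Record the interval of the root
word `0…0` relative to `a`, and the interval of the word `v 1 0…0` (with `v` of length `i`)
relative to that of its parent `v 0 0…0`: the two words agree in their first `i` letters, so by the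
gap bound both offsets lie in `[-⌈Dᵢ/δ⌉, ⌈Dᵢ/δ⌉] × [0, ⌈Dᵢ/δ⌉]`, a box with at most `(2Dᵢ/δ)²`
points. There are `2^i` such words `v`, and the parents let the code be decoded level by level. -/

lemma covN_le_card_of_mapsTo {X ι : Type*} {A : Set X} {ρ : X → X → ℝ} {δ : ℝ}
    {S : Finset ι} (Φ : X → ι) (hΦ : Set.MapsTo Φ A S)
    (hfib : ∀ x ∈ A, ∀ y ∈ A, Φ x = Φ y → ρ x y < δ) :
    covN A ρ δ ≤ S.card := by
  classical
  let T := {s ∈ S | ∃ x ∈ A, Φ x = s}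
  have hT : ∀ s ∈ T, ∃ x ∈ A, Φ x = s := fun s hs => (Finset.mem_filter.1 hs).2
  choose r hrA hrΦ using hT
  let F := T.attach.image fun s => r s.1 s.2
  unfold covN
  refine le_trans (sInf_le (a := (F.card : ℕ∞)) ⟨F, ?_, rfl, ?_⟩) ?_
  · intro y hy
    obtain ⟨s, -, rfl⟩ := Finset.mem_image.1 hy
    exact hrA _ _
  · intro x hx
    have hxT : Φ x ∈ T := Finset.mem_filter.2 ⟨hΦ hx, x, hx, rfl⟩
    exact ⟨_, Finset.mem_image_of_mem _ (Finset.mem_attach T ⟨_, hxT⟩),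
      hfib _ (hrA _ _) x hx (hrΦ _ _)⟩
  · exact_mod_cast Finset.card_image_le.trans <|
      Finset.card_attach.trans_le (Finset.card_filter_le _ _)

lemma exists_mem_Icc_dist_le {p q p' q' x : ℝ} (hpq' : p' ≤ q') (hx : x ∈ Set.Icc p q) :
    ∃ y ∈ Set.Icc p' q', dist x y ≤ max |p - p'| |q - q'| := by
  refine ⟨max p' (min x q'), ⟨le_max_left _ _, max_le hpq' (min_le_right _ _)⟩, ?_⟩
  have hx' : max p (min x q) = x := by rw [min_eq_left hx.2, max_eq_right hx.1]
  calc dist x (max p' (min x q'))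
      = |max p (min x q) - max p' (min x q')| := by rw [Real.dist_eq, hx']
    _ ≤ max |p - p'| |min x q - min x q'| := abs_max_sub_max_le_max _ _ _ _
    _ ≤ max |p - p'| |q - q'| :=
      max_le_max le_rfl ((abs_min_sub_min_le_max _ _ _ _).trans (by simp))

lemma hausdorffDist_Icc_le {p q p' q' : ℝ} (hpq : p ≤ q) (hpq' : p' ≤ q') :
    Metric.hausdorffDist (Set.Icc p q) (Set.Icc p' q') ≤ max |p - p'| |q - q'| := by
  refine Metric.hausdorffDist_le_of_mem_dist ((abs_nonneg _).trans (le_max_left _ _))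
    (fun x hx => exists_mem_Icc_dist_le hpq' hx) (fun x hx => ?_)
  rw [abs_sub_comm p, abs_sub_comm q]
  exact exists_mem_Icc_dist_le hpq hx

lemma abs_sub_lt_of_floor_div_eq {δ x y : ℝ} (hδ : 0 < δ) (h : ⌊x / δ⌋ = ⌊y / δ⌋) :
    |x - y| < δ := by
  have := Int.abs_sub_lt_one_of_floor_eq_floor h
  rwa [← sub_div, abs_div, abs_of_pos hδ, div_lt_one hδ] at this

lemma floor_div_sub_floor_div_le_ceil {δ x y ℓ : ℝ} (hδ : 0 < δ) (h : x - y ≤ ℓ) :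
    ⌊x / δ⌋ - ⌊y / δ⌋ ≤ ⌈ℓ / δ⌉ := by
  rw [Int.le_ceil_iff]
  have : (x - y) / δ ≤ ℓ / δ := by gcongr
  push_cast
  linarith [Int.floor_le (x / δ), Int.lt_floor_add_one (y / δ), sub_div x y δ]

noncomputable def gridBox (M : ℤ) : Finset (ℤ × ℤ) := Finset.Icc (-M) M ×ˢ Finset.Icc 0 M

lemma card_gridBox_le {x : ℝ} (hx : 5 ≤ x) : ((gridBox ⌈x⌉).card : ℝ) ≤ (2 * x) ^ 2 := by
  have hM : (0 : ℤ) ≤ ⌈x⌉ := Int.ceil_nonneg (by linarith)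
  have hMx : (⌈x⌉ : ℝ) < x + 1 := Int.ceil_lt_add_one x
  have hM' : (0 : ℝ) ≤ ⌈x⌉ := by exact_mod_cast hM
  have h₁ : ((Finset.Icc (-⌈x⌉) ⌈x⌉).card : ℝ) = 2 * ⌈x⌉ + 1 := by
    rw [← Int.cast_natCast, Int.card_Icc_of_le _ _ (by omega)]; push_cast; ring
  have h₂ : ((Finset.Icc 0 ⌈x⌉).card : ℝ) = ⌈x⌉ + 1 := by
    rw [← Int.cast_natCast, Int.card_Icc_of_le _ _ (by omega)]; push_cast; ring
  rw [gridBox, Finset.card_product, Nat.cast_mul, h₁, h₂]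
  nlinarith

section PadFalse

variable {d : ℕ}

def padFalse (i : ℕ) (v : Fin i → Bool) : Fin d → Bool :=
  fun j => if h : (j : ℕ) < i then v ⟨j, h⟩ else false

@[simp] lemma padFalse_zero (v : Fin 0 → Bool) :
    (padFalse 0 v : Fin d → Bool) = fun _ => false := by
  funext j
  simp [padFalse]

@[simp] lemma padFalse_self (v : Fin d → Bool) : padFalse d v = v := by
  funext j
  simp [padFalse]

lemma padFalse_snoc_of_lt {i : ℕ} (v : Fin i → Bool) (b : Bool) {j : Fin d}
    (hj : (j : ℕ) < i) : padFalse (i + 1) (Fin.snoc v b) j = padFalse i v j := by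
  simp [padFalse, hj, Nat.lt_succ_of_lt hj, Fin.snoc]

@[simp] lemma padFalse_snoc_false {i : ℕ} (v : Fin i → Bool) :
    (padFalse (i + 1) (Fin.snoc v false) : Fin d → Bool) = padFalse i v := by
  funext j
  rcases lt_or_ge (j : ℕ) i with hj | hj
  · exact padFalse_snoc_of_lt v false hj
  · simp [padFalse, Fin.snoc, not_lt.2 hj]

end PadFalse

noncomputable def gridPt (δ : ℝ) (I : ℝ × ℝ) : ℤ × ℤ := (⌊I.1 / δ⌋, ⌊I.2 / δ⌋)

noncomputable def relCode (δ p : ℝ) (I : ℝ × ℝ) : ℤ × ℤ :=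
  ((gridPt δ I).1 - ⌊p / δ⌋, (gridPt δ I).2 - (gridPt δ I).1)

lemma relCode_mem_gridBox {δ p ℓ : ℝ} {I : ℝ × ℝ} (hδ : 0 < δ) (hI : I.1 ≤ I.2)
    (hp : |I.1 - p| ≤ ℓ) (hlen : I.2 - I.1 ≤ ℓ) : relCode δ p I ∈ gridBox ⌈ℓ / δ⌉ := by
  rw [abs_le] at hp
  have h₁ := floor_div_sub_floor_div_le_ceil hδ hp.2
  have h₂ := floor_div_sub_floor_div_le_ceil (x := p) (y := I.1) (ℓ := ℓ) hδ (by linarith)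
  have h₃ := floor_div_sub_floor_div_le_ceil hδ hlen
  have h₄ : ⌊I.1 / δ⌋ ≤ ⌊I.2 / δ⌋ := Int.floor_le_floor (by gcongr)
  simp only [relCode, gridPt, gridBox, Finset.mem_product, Finset.mem_Icc]
  omega

lemma gridPt_eq_of_relCode_eq {δ p p' : ℝ} {I I' : ℝ × ℝ}
    (h : relCode δ p I = relCode δ p' I') (hp : ⌊p / δ⌋ = ⌊p' / δ⌋) :
    gridPt δ I = gridPt δ I' := by
  simp only [relCode, Prod.mk.injEq] at h
  ext <;> omega

lemma hausdorffDist_Icc_lt_of_gridPt_eq {δ : ℝ} {I I' : ℝ × ℝ} (hδ : 0 < δ) (hI : I.1 ≤ I.2)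
    (hI' : I'.1 ≤ I'.2) (h : gridPt δ I = gridPt δ I') :
    Metric.hausdorffDist (Set.Icc I.1 I.2) (Set.Icc I'.1 I'.2) < δ :=
  (hausdorffDist_Icc_le hI hI').trans_lt <| max_lt
    (abs_sub_lt_of_floor_div_eq hδ (congrArg Prod.fst h))
    (abs_sub_lt_of_floor_div_eq hδ (congrArg Prod.snd h))

section DiscreteCantorFamily

variable {a b δ : ℝ} {d : ℕ} {D : Fin d → ℝ} {e e' : (Fin d → Bool) → ℝ × ℝ}

lemma abs_sub_le_of_mem_DCFset (he : e ∈ DCFset a b d D) (i : Fin d) {ω ω' : Fin d → Bool}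
    (hωω' : ∀ j : Fin d, (j : ℕ) < i → ω j = ω' j) :
    |(e ω).1 - (e ω').1| ≤ D i ∧ (e ω).2 - (e ω).1 ≤ D i := by
  set U := Set.Icc (e ω).1 (e ω).2 ∪ Set.Icc (e ω').1 (e ω').2
  have hdiam : Metric.diam U ≤ D i := he.2.2.2 i i.isLt ω ω' hωω'
  have hU : Bornology.IsBounded U := (Metric.isBounded_Icc _ _).union (Metric.isBounded_Icc _ _)
  have hω₁ : (e ω).1 ∈ U := Or.inl ⟨le_rfl, he.1 ω⟩
  have hω₂ : (e ω).2 ∈ U := Or.inl ⟨he.1 ω, le_rfl⟩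
  have hω'₁ : (e ω').1 ∈ U := Or.inr ⟨le_rfl, he.1 ω'⟩
  exact ⟨(Metric.dist_le_diam_of_mem hU hω₁ hω'₁).trans hdiam,
    (le_abs_self _).trans ((Metric.dist_le_diam_of_mem hU hω₂ hω₁).trans hdiam)⟩

noncomputable def dcfCode (a δ : ℝ) (e : (Fin d → Bool) → ℝ × ℝ) :
    (ℤ × ℤ) × ((i : Fin d) → (Fin i → Bool) → ℤ × ℤ) :=
  (relCode δ a (e fun _ => false),
    fun i v => relCode δ (e (padFalse i v)).1 (e (padFalse (i + 1) (Fin.snoc v true))))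

noncomputable def dcfCodeBox (a b δ : ℝ) (D : Fin d → ℝ) :
    Finset ((ℤ × ℤ) × ((i : Fin d) → (Fin i → Bool) → ℤ × ℤ)) :=
  gridBox ⌈(b - a) / δ⌉ ×ˢ Fintype.piFinset fun i => Fintype.piFinset fun _ => gridBox ⌈D i / δ⌉

lemma dcfCode_mem_dcfCodeBox (hδ : 0 < δ) (he : e ∈ DCFset a b d D) :
    dcfCode a δ e ∈ dcfCodeBox a b δ D := by
  refine Finset.mem_product.2
    ⟨?_, Fintype.mem_piFinset.2 fun i => Fintype.mem_piFinset.2 fun v => ?_⟩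
  · obtain ⟨h₁, -⟩ := he.2.1 (fun _ => false) ⟨le_rfl, he.1 _⟩
    obtain ⟨-, h₂⟩ := he.2.1 (fun _ => false) ⟨he.1 _, le_rfl⟩
    refine relCode_mem_gridBox hδ (he.1 _) (abs_le.2 ⟨?_, ?_⟩) ?_ <;>
      linarith [he.1 fun _ => false]
  · obtain ⟨h₁, h₂⟩ := abs_sub_le_of_mem_DCFset he i fun j hj => padFalse_snoc_of_lt v true hj
    exact relCode_mem_gridBox hδ (he.1 _) h₁ h₂

lemma gridPt_padFalse_eq_of_dcfCode_eq (h : dcfCode a δ e = dcfCode a δ e') :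
    ∀ i ≤ d, ∀ v : Fin i → Bool,
      gridPt δ (e (padFalse i v)) = gridPt δ (e' (padFalse i v)) := by
  intro i
  induction i with
  | zero =>
    intro _ v
    rw [padFalse_zero]
    exact gridPt_eq_of_relCode_eq (congrArg Prod.fst h) rfl
  | succ i ih =>
    intro hi v
    obtain ⟨w, c, rfl⟩ : ∃ w c, v = Fin.snoc w c := ⟨_, _, (Fin.snoc_init_self v).symm⟩
    have hw := ih (by omega) w
    cases c with
    | false => rwa [padFalse_snoc_false]
    | true =>
      have hcode := congrFun (congrFun (congrArg Prod.snd h) ⟨i, hi⟩) w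
      exact gridPt_eq_of_relCode_eq hcode (congrArg Prod.fst hw)

lemma dDCF_lt_of_dcfCode_eq (hδ : 0 < δ) (he : ∀ ω, (e ω).1 ≤ (e ω).2)
    (he' : ∀ ω, (e' ω).1 ≤ (e' ω).2) (h : dcfCode a δ e = dcfCode a δ e') :
    dDCF e e' < δ := by
  refine (Finset.sup'_lt_iff _).2 fun ω _ =>
    hausdorffDist_Icc_lt_of_gridPt_eq hδ (he ω) (he' ω) ?_
  simpa using gridPt_padFalse_eq_of_dcfCode_eq h d le_rfl ω

lemma card_dcfCodeBox_le (hδ : 0 < δ) (hL : 5 * δ ≤ b - a) (hD : ∀ i, 5 * δ ≤ D i) :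
    ((dcfCodeBox a b δ D).card : ℝ)
      ≤ ((2 * (b - a) / δ) * ∏ i : Fin d, (2 * D i / δ) ^ (2 ^ (i : ℕ))) ^ 2 := by
  have hbox : ∀ ℓ, 5 * δ ≤ ℓ → ((gridBox ⌈ℓ / δ⌉).card : ℝ) ≤ (2 * ℓ / δ) ^ 2 := fun ℓ hℓ => by
    rw [mul_div_assoc]
    exact card_gridBox_le (by rwa [le_div_iff₀ hδ])
  simp only [dcfCodeBox, Finset.card_product, Fintype.card_piFinset, Finset.prod_const,
    Finset.card_univ, Fintype.card_fun, Fintype.card_bool, Fintype.card_fin]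
  push_cast
  rw [mul_pow, ← Finset.prod_pow]
  refine mul_le_mul (hbox _ hL) (Finset.prod_le_prod (fun i _ => by positivity) fun i _ => ?_)
    (by positivity) (by positivity)
  rw [← pow_mul, mul_comm (2 ^ (i : ℕ)) 2, pow_mul]
  exact pow_le_pow_left₀ (by positivity) (hbox _ (hD i)) _

end DiscreteCantorFamily

theorem cov_DCF_le_general
    (a b : ℝ) (d : ℕ) (hd : 0 < d)
    (D : Fin d → ℝ)
    (hDanti : ∀ i j : Fin d, i ≤ j → D j ≤ D i)
    (δ : ℝ) (hδ : 0 < δ)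
    (hδD : δ ≤ D ⟨d - 1, Nat.sub_lt hd one_pos⟩ / 10)
    (hδL : δ ≤ (b - a) / 10) :
    (covN (DCFset a b d D) dDCF δ : ℝ≥0∞)
      ≤ ENNReal.ofReal
          (((2 * (b - a) / δ) * ∏ i : Fin d, (2 * D i / δ) ^ (2 ^ (i : ℕ))) ^ 2) := by
  have hD : ∀ i, 5 * δ ≤ D i := fun i => by
    linarith [hDanti i ⟨d - 1, Nat.sub_lt hd one_pos⟩ (Nat.le_sub_one_of_lt i.isLt)]
  have hcov : covN (DCFset a b d D) dDCF δ ≤ (dcfCodeBox a b δ D).card :=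
    covN_le_card_of_mapsTo (dcfCode a δ) (fun _ he => dcfCode_mem_dcfCodeBox hδ he)
      fun _ he _ he' h => dDCF_lt_of_dcfCode_eq hδ he.1 he'.1 h
  calc (covN (DCFset a b d D) dDCF δ : ℝ≥0∞)
      ≤ (dcfCodeBox a b δ D).card := by exact_mod_cast hcov
    _ = ENNReal.ofReal (dcfCodeBox a b δ D).card := (ENNReal.ofReal_natCast _).symm
    _ ≤ _ := ENNReal.ofReal_le_ofReal (card_dcfCodeBox_le hδ (by linarith) hD)

/-- **Bounding the number of discrete Cantor families.** -/
theorem cov_DCF_le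
    (a b : ℝ) (hab : a ≤ b) (d : ℕ) (hd : 0 < d)
    (D : Fin d → ℝ) (hDpos : ∀ i, 0 < D i)
    (hDanti : ∀ i j : Fin d, i ≤ j → D j ≤ D i)
    (δ : ℝ) (hδ : 0 < δ)
    (hδD : δ ≤ D ⟨d - 1, Nat.sub_lt hd one_pos⟩ / 10)
    (hδL : δ ≤ (b - a) / 10) :
    (covN (DCFset a b d D) dDCF δ : ℝ≥0∞)
      ≤ ENNReal.ofReal
          (((2 * (b - a) / δ) * ∏ i : Fin d, (2 * D i / δ) ^ (2 ^ (i : ℕ))) ^ 2) :=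
  cov_DCF_le_general a b d hd D hDanti δ hδ hδD hδL
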